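/- Define Φ(a) = sup_{t>0} (h(ta) − h(t)) for a ≥ 1, where h(t) = −∫_ℝ f_t(x) log f_t(x) dx and f_t(x) = (φ(x − t) + φ(x + t))/2 with φ(x) = (2π)^{−1/2} e^{−x²/2}. Then lim_{a→∞} Φ(a) = log 2. -/

import Mathlib

/-!
Shifting by `t` and using the symmetry of `f_t`, `h(t) = h(G) + log 2 - D(t)` with
`D(t) = E log (1 + exp (-2t (G + t)))` for a standard Gaussian `G`, so that
`h(ta) - h(t) = D(t) - D(ta)`. Since `E exp (-2t (G + t)) = 1`, the tangent line of
`u ↦ log (1 + u)` at `u = 1` gives `0 ≤ D ≤ log 2`, hence `Φ ≤ log 2`. Conversely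
`log (1 + e^z) ≥ log 2 + z / 2` gives `D(t) ≥ log 2 - t²`, and `D(t) → 0` as `t → ∞` by dominated
convergence; the choice `t = a^(-1/2)` yields `Φ(a) ≥ log 2 - 1 / a - D(√a) → log 2`.
-/

/-- The standard Gaussian density. -/
noncomputable def gaussDensity (x : ℝ) : ℝ := (2 * Real.pi) ^ (-(1 / 2 : ℝ)) * Real.exp (-x ^ 2 / 2)

/-- The density of `X₀ * t + G`, where `X₀` is a fair `±1` random variable and `G` an independent
standard Gaussian. -/
noncomputable def mixDensity (t x : ℝ) : ℝ := (gaussDensity (x - t) + gaussDensity (x + t)) / 2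

/-- The differential entropy of `X₀ * t + G`. -/
noncomputable def mixEntropy (t : ℝ) : ℝ := -∫ x : ℝ, mixDensity t x * Real.log (mixDensity t x)

/-- `entropyGap a = sup_(t > 0) (h (t * a) - h t)`, where `h` is the differential entropy of
`X₀ * t + G`. -/
noncomputable def entropyGap (a : ℝ) : ℝ :=
  sSup ((fun t : ℝ => mixEntropy (t * a) - mixEntropy t) '' Set.Ioi 0)

open MeasureTheory Real Filter Topology

lemma gaussDensity_eq_gaussianPDFReal : gaussDensity = ProbabilityTheory.gaussianPDFReal 0 1 := by
  ext x
  simp [gaussDensity, ProbabilityTheory.gaussianPDFReal, sqrt_eq_rpow, rpow_neg two_pi_pos.le]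

lemma gaussDensity_pos (x : ℝ) : 0 < gaussDensity x := by
  unfold gaussDensity; positivity

lemma gaussDensity_neg (x : ℝ) : gaussDensity (-x) = gaussDensity x := by
  simp [gaussDensity]

lemma log_gaussDensity (x : ℝ) : log (gaussDensity x) = -(log (2 * π) / 2) - x ^ 2 / 2 := by
  rw [gaussDensity, log_mul (by positivity) (exp_ne_zero _), log_rpow two_pi_pos, log_exp]
  ring

lemma gaussDensity_add (x c : ℝ) :
    gaussDensity (x + c) = gaussDensity x * exp (-(c * (x + c / 2))) := by
  rw [gaussDensity, gaussDensity, mul_assoc, ← exp_add]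
  ring_nf

@[fun_prop]
lemma continuous_gaussDensity : Continuous gaussDensity := by
  unfold gaussDensity; fun_prop

lemma integrable_pow_mul_gaussDensity (n : ℕ) : Integrable fun x => x ^ n * gaussDensity x := by
  have h := (integrable_rpow_mul_exp_neg_mul_sq (b := 1 / 2) (by norm_num) (s := n)
    (by linarith [n.cast_nonneg (α := ℝ)])).const_mul ((2 * π) ^ (-(1 / 2 : ℝ)))
  refine h.congr (Eventually.of_forall fun x => ?_)
  simp only [rpow_natCast, gaussDensity]
  ring_nf

lemma integrable_gaussDensity : Integrable gaussDensity := by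
  simpa using integrable_pow_mul_gaussDensity 0

lemma integral_gaussDensity : ∫ x, gaussDensity x = 1 := by
  rw [gaussDensity_eq_gaussianPDFReal]
  exact ProbabilityTheory.integral_gaussianPDFReal_eq_one 0 one_ne_zero

lemma integral_mul_gaussDensity : ∫ x, x * gaussDensity x = 0 := by
  have h := integral_neg_eq_self (fun x => x * gaussDensity x) volume
  simp only [gaussDensity_neg, neg_mul, integral_neg] at h
  linarith

lemma integrable_gaussDensity_mul_log :
    Integrable fun x => gaussDensity x * log (gaussDensity x) := by
  have h := (integrable_gaussDensity.const_mul (-(log (2 * π) / 2))).sub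
    ((integrable_pow_mul_gaussDensity 2).div_const 2)
  refine h.congr (Eventually.of_forall fun x => ?_)
  simp only [Pi.sub_apply, log_gaussDensity]
  ring

noncomputable def softplus (z : ℝ) : ℝ := log (1 + exp z)

@[fun_prop]
lemma continuous_softplus : Continuous softplus :=
  (continuous_const.add continuous_exp).log fun z => (by positivity : 0 < 1 + exp z).ne'

lemma softplus_nonneg (z : ℝ) : 0 ≤ softplus z :=
  log_nonneg (by linarith [exp_pos z])

lemma softplus_le_log_two_add_max (z : ℝ) : softplus z ≤ log 2 + max z 0 := by
  rw [softplus, ← log_exp (max z 0), ← log_mul two_ne_zero (exp_ne_zero _)]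
  gcongr
  linarith [exp_le_exp.2 (le_max_left z 0), one_le_exp (le_max_right z 0)]

-- tangent line of the concave function `u ↦ log (1 + u)` at `u = 1`
lemma softplus_le_log_two_add (z : ℝ) : softplus z ≤ log 2 + (exp z - 1) / 2 := by
  have h := log_le_sub_one_of_pos (x := (1 + exp z) / 2) (by positivity)
  rw [log_div (by positivity) two_ne_zero] at h
  rw [softplus]
  linarith

lemma log_two_add_half_le_softplus (z : ℝ) : log 2 + z / 2 ≤ softplus z := by
  rw [softplus, ← log_exp (z / 2), ← log_mul two_ne_zero (exp_ne_zero _)]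
  gcongr
  have h : exp z = exp (z / 2) ^ 2 := by rw [← exp_nat_mul]; ring_nf
  nlinarith [sq_nonneg (exp (z / 2) - 1)]

lemma tendsto_softplus_atBot : Tendsto softplus atBot (𝓝 0) := by
  change Tendsto (fun z => log (1 + exp z)) atBot (𝓝 0)
  have h : Tendsto (fun z => 1 + exp z) atBot (𝓝 1) := by
    simpa using tendsto_exp_atBot.const_add 1
  simpa using h.log one_ne_zero

lemma mixDensity_neg (t x : ℝ) : mixDensity t (-x) = mixDensity t x := by
  rw [mixDensity, mixDensity, show -x - t = -(x + t) by ring, show -x + t = -(x - t) by ring,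
    gaussDensity_neg, gaussDensity_neg, add_comm]

lemma mixDensity_add (t y : ℝ) :
    mixDensity t (y + t) = gaussDensity y * (1 + exp (-(2 * t * (y + t)))) / 2 := by
  rw [mixDensity, add_sub_cancel_right, add_assoc, ← two_mul, gaussDensity_add]
  ring_nf

lemma log_mixDensity_add (t y : ℝ) :
    log (mixDensity t (y + t)) = log (gaussDensity y) + softplus (-(2 * t * (y + t))) - log 2 := by
  have hpos := gaussDensity_pos y
  rw [mixDensity_add, log_div (by positivity) two_ne_zero,
    log_mul hpos.ne' (by positivity), softplus]

/-- `h(t) = h(G) + log 2 - mixEntropyDeficit t`, where `h(G)` is the entropy of the standard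
Gaussian (`mixEntropy_eq`). -/
noncomputable def mixEntropyDeficit (t : ℝ) : ℝ :=
  ∫ y, gaussDensity y * softplus (-(2 * t * (y + t)))

lemma gaussDensity_mul_softplus_le (t y : ℝ) :
    gaussDensity y * softplus (-(2 * t * (y + t))) ≤ gaussDensity y * (log 2 + y ^ 2 / 2) := by
  have hz : max (-(2 * t * (y + t))) 0 ≤ y ^ 2 / 2 :=
    max_le (by nlinarith [sq_nonneg (y + 2 * t)]) (by positivity)
  have := softplus_le_log_two_add_max (-(2 * t * (y + t)))
  gcongr
  · exact (gaussDensity_pos y).le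
  · linarith

lemma integrable_gaussDensity_mul_log_two_add_sq :
    Integrable fun y => gaussDensity y * (log 2 + y ^ 2 / 2) := by
  refine ((integrable_gaussDensity.const_mul (log 2)).add
    ((integrable_pow_mul_gaussDensity 2).div_const 2)).congr (Eventually.of_forall fun y => ?_)
  simp only [Pi.add_apply]
  ring

lemma integrable_gaussDensity_mul_softplus (t : ℝ) :
    Integrable fun y => gaussDensity y * softplus (-(2 * t * (y + t))) := by
  refine integrable_gaussDensity_mul_log_two_add_sq.mono' (by fun_prop)
    (Eventually.of_forall fun y => ?_)
  rw [norm_of_nonneg (mul_nonneg (gaussDensity_pos y).le (softplus_nonneg _))]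
  exact gaussDensity_mul_softplus_le t y

lemma integral_gaussDensity_mul_log_mixDensity_add (t : ℝ) :
    ∫ y, gaussDensity y * log (mixDensity t (y + t))
      = (∫ y, gaussDensity y * log (gaussDensity y)) + mixEntropyDeficit t - log 2 := by
  have h y : gaussDensity y * log (mixDensity t (y + t)) = gaussDensity y * log (gaussDensity y)
      + gaussDensity y * softplus (-(2 * t * (y + t))) - log 2 * gaussDensity y := by
    rw [log_mixDensity_add]; ring
  simp only [h]
  rw [integral_sub, integral_add, integral_const_mul, integral_gaussDensity, mul_one,
    mixEntropyDeficit]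
  · exact integrable_gaussDensity_mul_log
  · exact integrable_gaussDensity_mul_softplus t
  · exact integrable_gaussDensity_mul_log.add (integrable_gaussDensity_mul_softplus t)
  · exact integrable_gaussDensity.const_mul _

lemma mixEntropy_eq (t : ℝ) :
    mixEntropy t = -(∫ y, gaussDensity y * log (gaussDensity y)) + log 2 - mixEntropyDeficit t := by
  set k : ℝ → ℝ := fun y => gaussDensity y * log (mixDensity t (y + t))
  have hk : Integrable k := by
    refine ((integrable_gaussDensity_mul_log.add (integrable_gaussDensity_mul_softplus t)).sub
      (integrable_gaussDensity.mul_const (log 2))).congr (Eventually.of_forall fun y => ?_)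
    simp only [k, Pi.add_apply, Pi.sub_apply, log_mixDensity_add]
    ring
  -- `x ↦ k (x - t)` carries the component centred at `t`; reflection carries the other one onto it
  have hsplit : ∀ x, mixDensity t x * log (mixDensity t x) = (k (x - t) + k (-x - t)) / 2 := by
    intro x
    simp only [k]
    rw [sub_add_cancel, sub_add_cancel, mixDensity_neg, show -x - t = -(x + t) by ring,
      gaussDensity_neg, mixDensity]
    ring
  have hk' : Integrable fun x => k (x - t) := hk.comp_sub_right t
  rw [mixEntropy, funext hsplit, integral_div, integral_add hk' hk'.comp_neg,
    integral_neg_eq_self (fun x => k (x - t)), integral_sub_right_eq_self k t,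
    integral_gaussDensity_mul_log_mixDensity_add]
  ring

lemma mixEntropyDeficit_nonneg (t : ℝ) : 0 ≤ mixEntropyDeficit t :=
  integral_nonneg fun y => mul_nonneg (gaussDensity_pos y).le (softplus_nonneg _)

lemma mixEntropyDeficit_le_log_two (t : ℝ) : mixEntropyDeficit t ≤ log 2 := by
  have hshift : Integrable fun y => gaussDensity (y + 2 * t) :=
    integrable_gaussDensity.comp_add_right _
  calc mixEntropyDeficit t
      ≤ ∫ y, (log 2 * gaussDensity y + (gaussDensity (y + 2 * t) - gaussDensity y) / 2) := by
        refine integral_mono (integrable_gaussDensity_mul_softplus t)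
          ((integrable_gaussDensity.const_mul _).add
            ((hshift.sub integrable_gaussDensity).div_const 2))
          fun y => ?_
        have hexp : gaussDensity (y + 2 * t) = gaussDensity y * exp (-(2 * t * (y + t))) := by
          rw [gaussDensity_add]; ring_nf
        have := mul_le_mul_of_nonneg_left (softplus_le_log_two_add (-(2 * t * (y + t))))
          (gaussDensity_pos y).le
        rw [hexp]
        linarith
    _ = log 2 := by
        rw [integral_add, integral_const_mul, integral_div, integral_sub hshift
          integrable_gaussDensity, integral_add_right_eq_self, integral_gaussDensity]
        · ring
        · exact integrable_gaussDensity.const_mul _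
        · exact (hshift.sub integrable_gaussDensity).div_const 2

lemma log_two_sub_sq_le_mixEntropyDeficit (t : ℝ) : log 2 - t ^ 2 ≤ mixEntropyDeficit t := by
  have hmean : Integrable fun y => t * (y * gaussDensity y) := by
    simpa using (integrable_pow_mul_gaussDensity 1).const_mul t
  calc log 2 - t ^ 2
      = ∫ y, ((log 2 - t ^ 2) * gaussDensity y - t * (y * gaussDensity y)) := by
        rw [integral_sub (integrable_gaussDensity.const_mul _) hmean,
          integral_const_mul, integral_const_mul, integral_gaussDensity, integral_mul_gaussDensity]
        ring
    _ ≤ mixEntropyDeficit t := by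
        refine integral_mono ((integrable_gaussDensity.const_mul _).sub hmean)
          (integrable_gaussDensity_mul_softplus t) fun y => ?_
        have := mul_le_mul_of_nonneg_left (log_two_add_half_le_softplus (-(2 * t * (y + t))))
          (gaussDensity_pos y).le
        linarith

lemma tendsto_mixEntropyDeficit_atTop : Tendsto mixEntropyDeficit atTop (𝓝 0) := by
  have hlim : ∀ y, Tendsto (fun t => gaussDensity y * softplus (-(2 * t * (y + t)))) atTop
      (𝓝 0) := by
    intro y
    have hz : Tendsto (fun t : ℝ => 2 * t * (y + t)) atTop atTop :=
      (tendsto_id.const_mul_atTop two_pos).atTop_mul_atTop₀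
        (tendsto_atTop_add_const_left _ y tendsto_id)
    simpa using (tendsto_softplus_atBot.comp (tendsto_neg_atTop_atBot.comp hz)).const_mul
      (gaussDensity y)
  have h := tendsto_integral_filter_of_dominated_convergence _
    (Eventually.of_forall fun t => (integrable_gaussDensity_mul_softplus t).aestronglyMeasurable)
    (Eventually.of_forall fun t => Eventually.of_forall fun y => by
      rw [norm_of_nonneg (mul_nonneg (gaussDensity_pos y).le (softplus_nonneg _))]
      exact gaussDensity_mul_softplus_le t y)
    integrable_gaussDensity_mul_log_two_add_sq (Eventually.of_forall hlim)
  rwa [integral_zero] at h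

lemma mixEntropy_sub_mixEntropy (s t : ℝ) :
    mixEntropy s - mixEntropy t = mixEntropyDeficit t - mixEntropyDeficit s := by
  rw [mixEntropy_eq, mixEntropy_eq]
  ring

lemma mixEntropy_mul_sub_mixEntropy_le_log_two (a t : ℝ) :
    mixEntropy (t * a) - mixEntropy t ≤ log 2 := by
  rw [mixEntropy_sub_mixEntropy]
  linarith [mixEntropyDeficit_le_log_two t, mixEntropyDeficit_nonneg (t * a)]

lemma entropyGap_le_log_two (a : ℝ) : entropyGap a ≤ log 2 := by
  refine Real.sSup_le ?_ (log_nonneg one_le_two)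
  rintro _ ⟨t, -, rfl⟩
  exact mixEntropy_mul_sub_mixEntropy_le_log_two a t

lemma log_two_sub_le_entropyGap {a : ℝ} (ha : 0 < a) :
    log 2 - a⁻¹ - mixEntropyDeficit (√a) ≤ entropyGap a := by
  have hbdd : BddAbove ((fun t => mixEntropy (t * a) - mixEntropy t) '' Set.Ioi 0) := by
    refine ⟨log 2, ?_⟩
    rintro _ ⟨t, -, rfl⟩
    exact mixEntropy_mul_sub_mixEntropy_le_log_two a t
  have hsqrt : (√a)⁻¹ * a = √a := by rw [inv_mul_eq_div, div_sqrt]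
  have hwitness : mixEntropy ((√a)⁻¹ * a) - mixEntropy (√a)⁻¹ ≤ entropyGap a :=
    le_csSup hbdd ⟨(√a)⁻¹, inv_pos.2 (sqrt_pos.2 ha), rfl⟩
  have hsmall := log_two_sub_sq_le_mixEntropyDeficit (√a)⁻¹
  rw [hsqrt, mixEntropy_sub_mixEntropy] at hwitness
  rw [inv_pow, sq_sqrt ha.le] at hsmall
  linarith

/-- `entropyGap a → log 2` as `a → ∞`. -/
theorem tendsto_entropyGap_log_two :
    Filter.Tendsto entropyGap Filter.atTop (nhds (Real.log 2)) := by
  have hlower : Tendsto (fun a => log 2 - a⁻¹ - mixEntropyDeficit (√a)) atTop (𝓝 (log 2)) := by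
    simpa using (tendsto_inv_atTop_zero.const_sub (log 2)).sub
      (tendsto_mixEntropyDeficit_atTop.comp tendsto_sqrt_atTop)
  refine tendsto_of_tendsto_of_tendsto_of_le_of_le' hlower tendsto_const_nhds ?_
    (Eventually.of_forall entropyGap_le_log_two)
  filter_upwards [eventually_gt_atTop 0] with a ha using log_two_sub_le_entropyGap ha
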